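/- Let $X \sim \mathrm{Beta}(a, b)$ with $a, b > 0$ and mean $\mu = a/(a+b)$. Then for any $x \in (\mu, 1)$, $P(X > x) \le \exp\left[-(a+b)\left\{\mu \log\frac{\mu}{x} + (1-\mu)\log\frac{1-\mu}{1-x}\right\}\right]$. -/

import Mathlib

/-!
Write `w(t) = t^(a-1) (1-t)^(b-1)` for the unnormalised density, `T(u) = ∫_u^1 w` and
`D(u) = u^a (1-u)^b`, so that `D' = -w·((a+b)u - a)`. Since `(a+b)t - a` increases in `t`,
`((a+b)u - a)·T(u) ≤ ∫_u^1 w(t)((a+b)t - a) dt = D(u)`, which says precisely that `T/D` decreases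
on `[μ, 1)`. Hence `P(X > x) ≤ P(X > μ)·D(x)/D(μ) ≤ D(x)/D(μ)`, and `D(x)/D(μ)` is the
exponential of `-(a+b)` times the binary KL divergence of `μ` from `x`.
-/

open MeasureTheory

/-- The Beta(a, b) probability measure on ℝ, given by its density
`Γ(a+b)/(Γ(a)Γ(b)) x^(a-1) (1-x)^(b-1)` on `(0,1)` with respect to Lebesgue measure. -/
noncomputable def betaMeasure (a b : ℝ) : Measure ℝ :=
  volume.withDensity fun x =>
    ENNReal.ofReal
      (if x ∈ Set.Ioo (0 : ℝ) 1 then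
        (Real.Gamma (a + b) / (Real.Gamma a * Real.Gamma b)) *
          x ^ (a - 1) * (1 - x) ^ (b - 1)
      else 0)

open Set Real intervalIntegral

noncomputable def betaWeight (a b t : ℝ) : ℝ := t ^ (a - 1) * (1 - t) ^ (b - 1)

noncomputable def betaTail (a b u : ℝ) : ℝ := ∫ t in u..1, betaWeight a b t

section Beta

variable {a b : ℝ}

lemma betaWeight_one_sub (a b t : ℝ) : betaWeight a b (1 - t) = betaWeight b a t := by
  simp only [betaWeight, sub_sub_cancel]
  ring

lemma betaWeight_nonneg {t : ℝ} (ht : t ∈ Icc 0 1) : 0 ≤ betaWeight a b t :=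
  mul_nonneg (rpow_nonneg ht.1 _) (rpow_nonneg (sub_nonneg.2 ht.2) _)

lemma continuousOn_betaWeight : ContinuousOn (betaWeight a b) (Ioo 0 1) :=
  (continuousOn_id.rpow_const fun _ ht => Or.inl ht.1.ne').mul
    ((continuousOn_const.sub continuousOn_id).rpow_const fun _ ht =>
      Or.inl (sub_ne_zero.2 ht.2.ne'))

lemma intervalIntegrable_betaWeight_zero_half (ha : 0 < a) (b : ℝ) :
    IntervalIntegrable (betaWeight a b) volume 0 (1 / 2) := by
  refine (intervalIntegrable_rpow' (by linarith : -1 < a - 1)).mul_continuousOn ?_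
  refine (continuousOn_const.sub continuousOn_id).rpow_const fun t ht => Or.inl ?_
  rw [uIcc_of_le (by norm_num)] at ht
  show (1 : ℝ) - t ≠ 0
  exact sub_ne_zero.2 (by linarith [ht.2] : t < 1).ne'

lemma intervalIntegrable_betaWeight (ha : 0 < a) (hb : 0 < b) {y z : ℝ}
    (hy : y ∈ Icc 0 1) (hz : z ∈ Icc 0 1) :
    IntervalIntegrable (betaWeight a b) volume y z := by
  have hright : IntervalIntegrable (betaWeight a b) volume (1 / 2) 1 := by
    have := (intervalIntegrable_betaWeight_zero_half hb a).comp_sub_left 1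
    norm_num [betaWeight_one_sub] at this
    exact this.symm
  refine ((intervalIntegrable_betaWeight_zero_half ha b).trans hright).mono_set ?_
  rw [uIcc_of_le zero_le_one]
  exact uIcc_subset_Icc hy hz

lemma hasDerivAt_betaTail (ha : 0 < a) (hb : 0 < b) {y : ℝ} (hy : y ∈ Ioo 0 1) :
    HasDerivAt (betaTail a b) (-betaWeight a b y) y :=
  integral_hasDerivAt_left (intervalIntegrable_betaWeight ha hb (Ioo_subset_Icc_self hy)
      (right_mem_Icc.2 zero_le_one))
    (continuousOn_betaWeight.stronglyMeasurableAtFilter isOpen_Ioo y hy)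
    (continuousOn_betaWeight.continuousAt (isOpen_Ioo.mem_nhds hy))

lemma hasDerivAt_rpow_mul_one_sub_rpow (a b : ℝ) {z : ℝ} (hz : z ∈ Ioo 0 1) :
    HasDerivAt (fun u => u ^ a * (1 - u) ^ b) (betaWeight a b z * (a - (a + b) * z)) z := by
  have hz0 : z ≠ 0 := hz.1.ne'
  have hz1 : 1 - z ≠ 0 := sub_ne_zero.2 hz.2.ne'
  refine (((hasDerivAt_id' z).rpow_const (Or.inl hz0)).mul
    (((hasDerivAt_id' z).const_sub 1).rpow_const (Or.inl hz1))).congr_deriv ?_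
  rw [betaWeight, rpow_sub_one hz0, rpow_sub_one hz1]
  field_simp
  ring

lemma integral_betaWeight_mul (ha : 0 < a) (hb : 0 < b) {y : ℝ} (hy : y ∈ Icc 0 1) :
    ∫ t in y..1, betaWeight a b t * ((a + b) * t - a) = y ^ a * (1 - y) ^ b := by
  have hFTC := integral_eq_sub_of_hasDerivAt_of_le hy.2
    (f := fun u => u ^ a * (1 - u) ^ b) (by fun_prop (disch := positivity))
    (fun z hz => hasDerivAt_rpow_mul_one_sub_rpow a b ⟨hy.1.trans_lt hz.1, hz.2⟩)
    ((intervalIntegrable_betaWeight ha hb hy (right_mem_Icc.2 zero_le_one)).mul_continuousOn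
      (by fun_prop))
  rw [one_rpow, sub_self, zero_rpow hb.ne', mul_zero, zero_sub] at hFTC
  rw [← neg_neg (y ^ a * _), ← hFTC, ← intervalIntegral.integral_neg]
  congr 1 with t
  ring

lemma mul_betaTail_le (ha : 0 < a) (hb : 0 < b) {y : ℝ} (hy : y ∈ Icc 0 1) :
    ((a + b) * y - a) * betaTail a b y ≤ y ^ a * (1 - y) ^ b := by
  have hint := intervalIntegrable_betaWeight ha hb hy (right_mem_Icc.2 zero_le_one)
  rw [betaTail, ← intervalIntegral.integral_const_mul, ← integral_betaWeight_mul ha hb hy]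
  refine integral_mono_on hy.2 (hint.const_mul _) (hint.mul_continuousOn (by fun_prop))
    fun t ht => ?_
  rw [mul_comm]
  exact mul_le_mul_of_nonneg_left (by nlinarith [ht.1])
    (betaWeight_nonneg ⟨hy.1.trans ht.1, ht.2⟩)

lemma antitoneOn_betaTail_div (ha : 0 < a) (hb : 0 < b) :
    AntitoneOn (fun u => betaTail a b u / (u ^ a * (1 - u) ^ b)) (Ico (a / (a + b)) 1) := by
  have hsub : Ico (a / (a + b)) 1 ⊆ Ioo 0 1 := fun u hu =>
    ⟨(by positivity : 0 < a / (a + b)).trans_le hu.1, hu.2⟩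
  have hderiv : ∀ z ∈ Ioo (0 : ℝ) 1, HasDerivAt (fun u => betaTail a b u / (u ^ a * (1 - u) ^ b))
      ((-betaWeight a b z * (z ^ a * (1 - z) ^ b) -
        betaTail a b z * (betaWeight a b z * (a - (a + b) * z))) / (z ^ a * (1 - z) ^ b) ^ 2) z :=
    fun z hz => (hasDerivAt_betaTail ha hb hz).div (hasDerivAt_rpow_mul_one_sub_rpow a b hz)
      (by have := sub_pos.2 hz.2; have := hz.1; positivity)
  refine antitoneOn_of_deriv_nonpos (convex_Ico _ _)
    (fun z hz => (hderiv z (hsub hz)).continuousAt.continuousWithinAt)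
    (fun z hz => (hderiv z (hsub (interior_subset hz))).differentiableAt.differentiableWithinAt)
    fun z hz => ?_
  rw [interior_Ico] at hz
  have hz' : z ∈ Ioo 0 1 := hsub (Ioo_subset_Ico_self hz)
  rw [(hderiv z hz').deriv]
  refine div_nonpos_of_nonpos_of_nonneg ?_ (sq_nonneg _)
  have hw := betaWeight_nonneg (a := a) (b := b) (Ioo_subset_Icc_self hz')
  have := mul_betaTail_le ha hb (Ioo_subset_Icc_self hz')
  nlinarith [mul_nonneg hw (sub_nonneg.2 this)]

lemma exp_neg_mul_binaryKL {m x : ℝ} (s : ℝ) (hm : m ∈ Ioo 0 1) (hx : x ∈ Ioo 0 1) :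
    exp (-(s * (m * log (m / x) + (1 - m) * log ((1 - m) / (1 - x))))) =
      x ^ (s * m) * (1 - x) ^ (s * (1 - m)) / (m ^ (s * m) * (1 - m) ^ (s * (1 - m))) := by
  have hm1 := sub_pos.2 hm.2
  have hx1 := sub_pos.2 hx.2
  rw [log_div hm.1.ne' hx.1.ne', log_div hm1.ne' hx1.ne', rpow_def_of_pos hm.1,
    rpow_def_of_pos hm1, rpow_def_of_pos hx.1, rpow_def_of_pos hx1, ← exp_add, ← exp_add,
    ← exp_sub]
  congr 1
  ring

lemma betaMeasure_eq (a b : ℝ) : betaMeasure a b = ProbabilityTheory.betaMeasure a b := by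
  rw [betaMeasure, ProbabilityTheory.betaMeasure]
  congr 1 with t
  rw [ProbabilityTheory.betaPDF_eq, ProbabilityTheory.beta, one_div_div]
  rfl

lemma betaMeasure_Ioi (ha : 0 < a) (hb : 0 < b) {x : ℝ} (hx : x ∈ Icc 0 1) :
    betaMeasure a b (Ioi x) = ENNReal.ofReal
      (Real.Gamma (a + b) / (Real.Gamma a * Real.Gamma b) * betaTail a b x) := by
  set C := Real.Gamma (a + b) / (Real.Gamma a * Real.Gamma b)
  have hC : 0 ≤ C := (div_pos (Gamma_pos_of_pos (add_pos ha hb))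
    (mul_pos (Gamma_pos_of_pos ha) (Gamma_pos_of_pos hb))).le
  have hint : IntegrableOn (fun t => C * betaWeight a b t) (Ioc x 1) :=
    ((intervalIntegrable_iff_integrableOn_Ioc_of_le hx.2).1
      (intervalIntegrable_betaWeight ha hb hx (right_mem_Icc.2 zero_le_one))).const_mul C
  rw [betaMeasure, withDensity_apply _ measurableSet_Ioi, betaTail,
    ← intervalIntegral.integral_const_mul, integral_of_le hx.2,
    ofReal_integral_eq_lintegral_ofReal hint (ae_restrict_of_forall_mem measurableSet_Ioc
      fun t ht => mul_nonneg hC (betaWeight_nonneg ⟨hx.1.trans ht.1.le, ht.2⟩)),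
    ← Ioc_union_Ioi_eq_Ioi hx.2, lintegral_union measurableSet_Ioi Ioc_disjoint_Ioi_same,
    setLIntegral_eq_zero measurableSet_Ioi fun t ht => by simp [ht.out.not_gt],
    add_zero, ← Measure.restrict_congr_set Ioo_ae_eq_Ioc]
  refine setLIntegral_congr_fun measurableSet_Ioo fun t ht => ?_
  rw [if_pos ⟨hx.1.trans_lt ht.1, ht.2⟩, mul_assoc, betaWeight]

end Beta

theorem stmt_5 (a b : ℝ) (ha : 0 < a) (hb : 0 < b) (x : ℝ)
    (hx1 : a / (a + b) < x) (hx2 : x < 1) :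
    betaMeasure a b {y : ℝ | x < y}
      ≤ ENNReal.ofReal
          (Real.exp (-((a + b) *
            ((a / (a + b)) * Real.log ((a / (a + b)) / x) +
              (1 - a / (a + b)) * Real.log ((1 - a / (a + b)) / (1 - x)))))) := by
  set m := a / (a + b)
  set C := Real.Gamma (a + b) / (Real.Gamma a * Real.Gamma b)
  have hm : m ∈ Ioo 0 1 := ⟨by positivity, (div_lt_one (by positivity)).2 (by linarith)⟩
  have hx : x ∈ Ioo 0 1 := ⟨hm.1.trans hx1, hx2⟩
  have hma : (a + b) * m = a := mul_div_cancel₀ _ (by positivity)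
  have hmb : (a + b) * (1 - m) = b := by rw [mul_one_sub, hma]; ring
  have hDm : 0 < m ^ a * (1 - m) ^ b := by have := sub_pos.2 hm.2; have := hm.1; positivity
  have hDx : 0 < x ^ a * (1 - x) ^ b := by have := sub_pos.2 hx.2; have := hx.1; positivity
  have htail : C * betaTail a b m ≤ 1 := by
    have := ProbabilityTheory.isProbabilityMeasureBeta ha hb
    have h := prob_le_one (μ := ProbabilityTheory.betaMeasure a b) (s := Ioi m)
    rw [← betaMeasure_eq, betaMeasure_Ioi ha hb (Ioo_subset_Icc_self hm)] at h
    exact ENNReal.ofReal_le_one.1 h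
  have hratio := antitoneOn_betaTail_div ha hb ⟨le_rfl, hm.2⟩ ⟨hx1.le, hx2⟩ hx1.le
  rw [div_le_div_iff₀ hDx hDm] at hratio
  rw [show {y | x < y} = Ioi x from rfl, betaMeasure_Ioi ha hb (Ioo_subset_Icc_self hx),
    exp_neg_mul_binaryKL (a + b) hm hx, hma, hmb]
  refine ENNReal.ofReal_le_ofReal ((le_div_iff₀ hDm).2 ?_)
  calc C * betaTail a b x * (m ^ a * (1 - m) ^ b)
      ≤ C * betaTail a b m * (x ^ a * (1 - x) ^ b) := by
        rw [mul_assoc, mul_assoc]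
        exact mul_le_mul_of_nonneg_left hratio (by positivity)
    _ ≤ x ^ a * (1 - x) ^ b := mul_le_of_le_one_left hDx.le htail
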